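/- arXiv:1012.2799 — 2 statements merged into one kernel-verified Lean document; each statement's English description precedes it below -/
import Mathlib

section
/- Let s = (s_0,…,s_{m−1}) be a probability vector with all s_j > 0, ν = φμ_s, and h = −Σ_{j=0}^{m−1} s_j ln s_j. Then the set W = {x ∈ (0,1) : limsup_{n→∞} (−(1/n) ln ν(I_n(x))) ≤ h} has Hausdorff dimension HD(W) ≤ h / ln m. (Upper bound (4.13), Billingsley-type lemma for base-m basic intervals.) -/
/-!
Fix `e > h / log m`. A point `x` with `limsup -(1/n) log ν(I_n x) ≤ h` has
`ν(I_n x) ≥ |I_n x|^e` for all large `n`. The rank-`n` intervals are disjoint, so at most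
`ν(ℝ) · |I_n|^(-e)` of them carry that much mass; covering the set by them bounds its
`d`-dimensional Hausdorff sums by `ν(ℝ) · m^(-n(d - e)) → 0` for every `d > e`.
For `ν = φμ_s` one has `ν(I_n x) ≥ (min_j s_j)^(n+1)`, which keeps `-(1/n) log ν(I_n x)` bounded,
so that its `limsup` is the genuine one.
-/

open MeasureTheory Filter
open scoped ENNReal

/-- The `i`-th digit `a_i(x) ∈ {0,…,m−1}` of the base-`m` expansion of `x ∈ [0,1)`
(the expansion which does not end with an infinite tail of digits `m−1`). -/
noncomputable def bDigit (m i : ℕ) (x : ℝ) : ℕ := ⌊x * (m : ℝ) ^ (i + 1)⌋₊ % m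

/-- The coding map `φ(ξ) = Σ_{i≥1} m^{−i} ξ_{i−1}` from sequences to `[0,1]`. -/
noncomputable def phiMap (m : ℕ) (ξ : ℕ → ℕ) : ℝ := ∑' i : ℕ, (ξ i : ℝ) / (m : ℝ) ^ (i + 1)

/-- The rank-`n` basic interval `I_n(x)` containing `x`: the set of `y ∈ [0,1)` whose first
`n` base-`m` digits agree with those of `x`. -/
noncomputable def basicInterval (m n : ℕ) (x : ℝ) : Set ℝ :=
  {y ∈ Set.Ico (0 : ℝ) 1 | ∀ i < n, bDigit m i y = bDigit m i x}

open Set Function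
open scoped Topology

def adicInterval (m n k : ℕ) : Set ℝ := Ico ((k : ℝ) / m ^ n) ((k + 1) / m ^ n)

section Digits

variable {m : ℕ}

lemma bDigit_lt (hm : 0 < m) (i : ℕ) (x : ℝ) : bDigit m i x < m :=
  Nat.mod_lt _ hm

lemma floor_mul_pow_succ_div (hm : 0 < m) (x : ℝ) (n : ℕ) :
    ⌊x * (m : ℝ) ^ (n + 1)⌋₊ / m = ⌊x * (m : ℝ) ^ n⌋₊ := by
  rw [← Nat.floor_div_natCast, pow_succ, ← mul_assoc, mul_div_cancel_right₀ _ (by positivity)]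

lemma floor_mul_pow_lt (hm : 0 < m) {x : ℝ} (hx : x < 1) (n : ℕ) :
    ⌊x * (m : ℝ) ^ n⌋₊ < m ^ n := by
  rw [Nat.floor_lt' (by positivity)]
  push_cast
  exact mul_lt_of_lt_one_left (by positivity) hx

lemma forall_bDigit_eq_iff (hm : 0 < m) {x y : ℝ} (hx : x < 1) (hy : y < 1) (n : ℕ) :
    (∀ i < n, bDigit m i y = bDigit m i x) ↔ ⌊y * (m : ℝ) ^ n⌋₊ = ⌊x * (m : ℝ) ^ n⌋₊ := by
  induction n with
  | zero => simp [Nat.floor_eq_zero.mpr hx, Nat.floor_eq_zero.mpr hy]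
  | succ n ih =>
    rw [Nat.forall_lt_succ_right, ih, Nat.ext_div_modEq_iff m ⌊y * (m : ℝ) ^ (n + 1)⌋₊,
      floor_mul_pow_succ_div hm, floor_mul_pow_succ_div hm]
    rfl

lemma mem_adicInterval_iff (hm : 0 < m) {n k : ℕ} {y : ℝ} :
    y ∈ adicInterval m n k ↔ 0 ≤ y ∧ ⌊y * (m : ℝ) ^ n⌋₊ = k := by
  have hpow : (0 : ℝ) < (m : ℝ) ^ n := by positivity
  rw [adicInterval, mem_Ico, div_le_iff₀ hpow, lt_div_iff₀ hpow]
  constructor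
  · rintro ⟨hk, hk1⟩
    have hy : 0 ≤ y := nonneg_of_mul_nonneg_left (le_trans (by positivity) hk) hpow
    exact ⟨hy, (Nat.floor_eq_iff (by positivity)).mpr ⟨hk, hk1⟩⟩
  · rintro ⟨hy, rfl⟩
    exact ⟨Nat.floor_le (by positivity), Nat.lt_floor_add_one _⟩

lemma basicInterval_eq_adicInterval (hm : 0 < m) {x : ℝ} (hx : x ∈ Ico (0 : ℝ) 1) (n : ℕ) :
    basicInterval m n x = adicInterval m n ⌊x * (m : ℝ) ^ n⌋₊ := by
  ext y
  rw [mem_adicInterval_iff hm]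
  constructor
  · rintro ⟨hy, hdig⟩
    exact ⟨hy.1, (forall_bDigit_eq_iff hm hx.2 hy.2 n).mp hdig⟩
  · rintro ⟨hy, hfloor⟩
    have hy1 : y < 1 := by
      have hlt := floor_mul_pow_lt hm hx.2 n
      rw [← hfloor, Nat.floor_lt' (by positivity)] at hlt
      push_cast at hlt
      exact (mul_lt_iff_lt_one_left (by positivity)).mp hlt
    exact ⟨⟨hy, hy1⟩, (forall_bDigit_eq_iff hm hx.2 hy1 n).mpr hfloor⟩

lemma measurableSet_basicInterval (hm : 0 < m) {x : ℝ} (hx : x ∈ Ico (0 : ℝ) 1) (n : ℕ) :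
    MeasurableSet (basicInterval m n x) := by
  rw [basicInterval_eq_adicInterval hm hx]
  exact measurableSet_Ico

lemma pairwise_disjoint_adicInterval (hm : 0 < m) (n : ℕ) :
    Pairwise (Disjoint on (adicInterval m n)) := fun _ _ hkl ↦
  disjoint_left.mpr fun _ hk hl ↦
    hkl (((mem_adicInterval_iff hm).mp hk).2.symm.trans ((mem_adicInterval_iff hm).mp hl).2)

lemma ediam_adicInterval (n k : ℕ) :
    Metric.ediam (adicInterval m n k) = ENNReal.ofReal ((m : ℝ) ^ n)⁻¹ := by
  rw [adicInterval, Real.ediam_Ico]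
  congr 1
  ring

end Digits

section CodingMap

variable {m : ℕ}

lemma phiMap_eq_ofDigits (ξ : ℕ → Fin m) : phiMap m (fun i ↦ ξ i) = Real.ofDigits ξ :=
  tsum_congr fun _ ↦ div_eq_mul_inv _ _

lemma measurable_phiMap : Measurable (phiMap m) :=
  Measurable.tsum fun i ↦ (measurable_from_top.comp (measurable_pi_apply i)).div_const _

/-- Forcing the digit of rank `n` to be `0` keeps `φ ξ` away from the right endpoint of
`I_n(x)`, which a tail of digits `m - 1` would reach. -/
lemma phiMap_mem_basicInterval (hm : 1 < m) {x : ℝ} (hx : x ∈ Ico (0 : ℝ) 1) {n : ℕ}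
    {ξ : ℕ → Fin m} (hξ : ∀ i < n, (ξ i : ℕ) = bDigit m i x) (hξn : (ξ n : ℕ) = 0) :
    phiMap m (fun i ↦ ξ i) ∈ basicInterval m n x := by
  have : NeZero m := ⟨by omega⟩
  have hm0 : 0 < m := by omega
  have hpow : (0 : ℝ) < (m : ℝ) ^ n := by positivity
  set k := ⌊x * (m : ℝ) ^ n⌋₊
  have hhead : ∑ i ∈ Finset.range (n + 1), Real.ofDigitsTerm ξ i = k / (m : ℝ) ^ n := by
    have hdigits : ∀ i ∈ Finset.range n,
        Real.ofDigitsTerm ξ i = Real.ofDigitsTerm (Real.digits x m) i := fun i hi ↦ by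
      simp [Real.ofDigitsTerm, Real.digits, hξ i (Finset.mem_range.mp hi), bDigit]
    have hlast : Real.ofDigitsTerm ξ n = 0 := by simp [Real.ofDigitsTerm, hξn]
    rw [Finset.sum_range_succ, hlast, add_zero, Finset.sum_congr rfl hdigits, eq_div_iff hpow.ne',
      mul_comm, Real.ofDigits_digits_sum_eq hx, mul_comm]
  set tail := Real.ofDigits fun i ↦ ξ (i + (n + 1))
  have htail : 0 ≤ tail ∧ tail ≤ 1 := ⟨Real.ofDigits_nonneg _, Real.ofDigits_le_one _⟩
  have hstep : ((m : ℝ) ^ (n + 1))⁻¹ < ((m : ℝ) ^ n)⁻¹ :=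
    inv_strictAnti₀ hpow (pow_lt_pow_right₀ (by exact_mod_cast hm) n.lt_succ_self)
  rw [basicInterval_eq_adicInterval hm0 hx, adicInterval, phiMap_eq_ofDigits,
    Real.ofDigits_eq_sum_add_ofDigits ξ (n + 1), hhead, add_div, div_eq_mul_inv 1, one_mul]
  have htail_le : ((m : ℝ) ^ (n + 1))⁻¹ * tail ≤ ((m : ℝ) ^ (n + 1))⁻¹ :=
    mul_le_of_le_one_right (by positivity) htail.2
  constructor
  · have : 0 ≤ ((m : ℝ) ^ (n + 1))⁻¹ * tail := mul_nonneg (by positivity) htail.1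
    linarith
  · linarith

end CodingMap

section BernoulliMeasure

variable {m : ℕ} {s : ℕ → ℝ} {μs : Measure (ℕ → ℕ)}

lemma measure_exists_ge_eq_zero (hstop : ∀ j, m ≤ j → s j = 0)
    (hcyl : ∀ (n : ℕ) (β : ℕ → ℕ),
      μs {ξ | ∀ i ≤ n, ξ i = β i} = ∏ i ∈ Finset.range (n + 1), ENNReal.ofReal (s (β i))) :
    μs {ξ | ∃ i, m ≤ ξ i} = 0 := by
  let cylinder (j : ℕ) (v : Fin (j + 1) → ℕ) : Set (ℕ → ℕ) :=
    {ξ | ∀ i ≤ j, ξ i = if h : i < j + 1 then v ⟨i, h⟩ else 0}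
  have hcylinder : ∀ j v, m ≤ v (Fin.last j) → μs (cylinder j v) = 0 := fun j v hv ↦ by
    rw [hcyl]
    refine Finset.prod_eq_zero (Finset.self_mem_range_succ j) ?_
    rw [dif_pos j.lt_succ_self]
    exact ENNReal.ofReal_eq_zero.mpr (hstop _ hv).le
  have hsub : {ξ : ℕ → ℕ | ∃ i, m ≤ ξ i} ⊆
      ⋃ (j : ℕ) (v : Fin (j + 1) → ℕ) (_ : m ≤ v (Fin.last j)), cylinder j v := by
    rintro ξ ⟨j, hj⟩
    simp only [mem_iUnion]
    exact ⟨j, fun i ↦ ξ i, hj, fun i hi ↦ by simp [Nat.lt_succ_of_le hi]⟩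
  exact measure_mono_null hsub <| measure_iUnion_null fun j ↦ measure_iUnion_null fun v ↦
    measure_iUnion_null (hcylinder j v)

lemma prod_le_map_phiMap_basicInterval (hm : 1 < m) (hstop : ∀ j, m ≤ j → s j = 0)
    (hcyl : ∀ (n : ℕ) (β : ℕ → ℕ),
      μs {ξ | ∀ i ≤ n, ξ i = β i} = ∏ i ∈ Finset.range (n + 1), ENNReal.ofReal (s (β i)))
    {x : ℝ} (hx : x ∈ Ico (0 : ℝ) 1) (n : ℕ) :
    ∏ i ∈ Finset.range (n + 1), ENNReal.ofReal (s (if i < n then bDigit m i x else 0)) ≤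
      μs.map (phiMap m) (basicInterval m n x) := by
  rw [Measure.map_apply measurable_phiMap (measurableSet_basicInterval (by omega) hx n), ← hcyl,
    ← measure_sdiff_null (measure_exists_ge_eq_zero hstop hcyl)]
  refine measure_mono fun ξ ⟨hξ, hξm⟩ ↦ ?_
  simp only [mem_ofPred_eq, not_exists, not_le] at hξ hξm
  exact phiMap_mem_basicInterval hm hx (ξ := fun i ↦ ⟨ξ i, hξm i⟩)
    (fun i hi ↦ by simp [hξ i hi.le, hi]) (by simp [hξ n le_rfl])

lemma exists_pow_le_map_phiMap_basicInterval (hm : 1 < m) (hspos : ∀ j < m, 0 < s j)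
    (hstop : ∀ j, m ≤ j → s j = 0)
    (hcyl : ∀ (n : ℕ) (β : ℕ → ℕ),
      μs {ξ | ∀ i ≤ n, ξ i = β i} = ∏ i ∈ Finset.range (n + 1), ENNReal.ofReal (s (β i))) :
    ∃ c > 0, ∀ x ∈ Ico (0 : ℝ) 1, ∀ n,
      ENNReal.ofReal (c ^ (n + 1)) ≤ μs.map (phiMap m) (basicInterval m n x) := by
  obtain ⟨j₀, hj₀, hmin⟩ :=
    (Finset.range m).exists_min_image s ⟨0, Finset.mem_range.mpr (by omega)⟩
  refine ⟨s j₀, hspos j₀ (Finset.mem_range.mp hj₀), fun x hx n ↦ ?_⟩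
  have hdigit : ∀ i, (if i < n then bDigit m i x else 0) ∈ Finset.range m := fun i ↦ by
    split_ifs
    exacts [Finset.mem_range.mpr (bDigit_lt (by omega) i x), Finset.mem_range.mpr (by omega)]
  calc ENNReal.ofReal (s j₀ ^ (n + 1))
      = ENNReal.ofReal (s j₀) ^ (Finset.range (n + 1)).card := by
        rw [ENNReal.ofReal_pow (hspos j₀ (Finset.mem_range.mp hj₀)).le, Finset.card_range]
    _ ≤ ∏ i ∈ Finset.range (n + 1), ENNReal.ofReal (s (if i < n then bDigit m i x else 0)) :=
        Finset.pow_card_le_prod _ _ _ fun i _ ↦ ENNReal.ofReal_le_ofReal (hmin _ (hdigit i))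
    _ ≤ _ := prod_le_map_phiMap_basicInterval hm hstop hcyl hx n

end BernoulliMeasure

section Billingsley

variable {m : ℕ} (ν : Measure ℝ)

lemma card_mul_le_measure_univ (hm : 0 < m) {n : ℕ} (F : Finset ℕ) {δ : ℝ≥0∞}
    (hδ : ∀ k ∈ F, δ ≤ ν (adicInterval m n k)) : F.card * δ ≤ ν univ :=
  calc F.card * δ = ∑ _k ∈ F, δ := by rw [Finset.sum_const, nsmul_eq_mul]
    _ ≤ ∑ k ∈ F, ν (adicInterval m n k) := Finset.sum_le_sum hδ
    _ = ν (⋃ k ∈ F, adicInterval m n k) := (measure_biUnion_finset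
          ((pairwise_disjoint_adicInterval hm n).set_pairwise _) fun _ _ ↦ measurableSet_Ico).symm
    _ ≤ ν univ := measure_mono (subset_univ _)

lemma tendsto_inv_pow_rpow_atTop (hm : 1 < m) {c : ℝ} (hc : 0 < c) :
    Tendsto (fun n : ℕ ↦ ((m : ℝ) ^ n)⁻¹ ^ c) atTop (𝓝 0) := by
  refine ((tendsto_rpow_neg_atTop hc).comp
    (tendsto_pow_atTop_atTop_of_one_lt (by exact_mod_cast hm : (1 : ℝ) < m))).congr fun n ↦ ?_
  simp [Real.inv_rpow (by positivity : (0 : ℝ) ≤ (m : ℝ) ^ n), Real.rpow_neg]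

lemma hausdorffMeasure_eq_zero_of_forall_le_measure_basicInterval (hm : 1 < m)
    [IsFiniteMeasure ν] {A : Set ℝ} (hA : A ⊆ Ico 0 1) {e d : ℝ} (hed : e < d) {N : ℕ}
    (hν : ∀ x ∈ A, ∀ n ≥ N,
      ENNReal.ofReal (((m : ℝ) ^ n)⁻¹ ^ e) ≤ ν (basicInterval m n x)) :
    μH[d] A = 0 := by
  classical
  have hm0 : 0 < m := by omega
  let F (n : ℕ) : Finset ℕ := {k ∈ Finset.range (m ^ n) | ∃ x ∈ A, ⌊x * (m : ℝ) ^ n⌋₊ = k}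
  have hcover : ∀ n, A ⊆ ⋃ k : F n, adicInterval m n k := fun n x hx ↦ by
    have hk : ⌊x * (m : ℝ) ^ n⌋₊ ∈ F n := Finset.mem_filter.mpr
      ⟨Finset.mem_range.mpr (floor_mul_pow_lt hm0 (hA hx).2 n), x, hx, rfl⟩
    exact mem_iUnion.mpr ⟨⟨_, hk⟩, (mem_adicInterval_iff hm0).mpr ⟨(hA hx).1, rfl⟩⟩
  have hsum : ∀ n ≥ N, ∑ k : F n, Metric.ediam (adicInterval m n k) ^ d ≤
      ν univ * ENNReal.ofReal (((m : ℝ) ^ n)⁻¹ ^ (d - e)) := by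
    intro n hn
    have hρ : (0 : ℝ) < ((m : ℝ) ^ n)⁻¹ := by positivity
    have hcard := card_mul_le_measure_univ ν hm0 (F n)
      (δ := ENNReal.ofReal (((m : ℝ) ^ n)⁻¹ ^ e)) fun k hk ↦ by
        obtain ⟨x, hx, rfl⟩ := (Finset.mem_filter.mp hk).2
        rw [← basicInterval_eq_adicInterval hm0 (hA hx)]
        exact hν x hx n hn
    calc ∑ k : F n, Metric.ediam (adicInterval m n k) ^ d
        = (F n).card * (ENNReal.ofReal (((m : ℝ) ^ n)⁻¹ ^ e) *
            ENNReal.ofReal (((m : ℝ) ^ n)⁻¹ ^ (d - e))) := by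
          simp only [ediam_adicInterval, ENNReal.ofReal_rpow_of_pos hρ, Finset.sum_const,
            Finset.card_univ, Fintype.card_coe, nsmul_eq_mul,
            ← ENNReal.ofReal_mul (Real.rpow_nonneg hρ.le _), ← Real.rpow_add hρ, add_sub_cancel]
      _ ≤ ν univ * ENNReal.ofReal (((m : ℝ) ^ n)⁻¹ ^ (d - e)) := by
          rw [← mul_assoc]
          gcongr
  have hlim : Tendsto (fun n : ℕ ↦ ν univ * ENNReal.ofReal (((m : ℝ) ^ n)⁻¹ ^ (d - e)))
      atTop (𝓝 0) := by
    simpa using ENNReal.Tendsto.const_mul (ENNReal.tendsto_ofReal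
      (tendsto_inv_pow_rpow_atTop hm (sub_pos.mpr hed))) (Or.inr (measure_ne_top ν univ))
  have hradius : Tendsto (fun n : ℕ ↦ ENNReal.ofReal ((m : ℝ) ^ n)⁻¹) atTop (𝓝 0) := by
    simpa using ENNReal.tendsto_ofReal (tendsto_inv_pow_rpow_atTop hm one_pos)
  refine nonpos_iff_eq_zero.mp ?_
  calc μH[d] A
      ≤ liminf (fun n ↦ ∑ k : F n, Metric.ediam (adicInterval m n k) ^ d) atTop :=
        Measure.hausdorffMeasure_le_liminf_sum (ι := fun n ↦ F n) d A _ hradius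
          (fun n k ↦ adicInterval m n k) (.of_forall fun n k ↦ (ediam_adicInterval n k).le)
          (.of_forall hcover)
    _ ≤ liminf (fun n : ℕ ↦ ν univ * ENNReal.ofReal (((m : ℝ) ^ n)⁻¹ ^ (d - e))) atTop :=
        liminf_le_liminf ((eventually_ge_atTop N).mono hsum)
    _ = 0 := hlim.liminf_eq

theorem dimH_le_of_eventually_le_measure_basicInterval (hm : 1 < m) [IsFiniteMeasure ν]
    {A : Set ℝ} (hA : A ⊆ Ico 0 1) {e : ℝ}
    (hν : ∀ x ∈ A, ∀ᶠ n in atTop,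
      ENNReal.ofReal (((m : ℝ) ^ n)⁻¹ ^ e) ≤ ν (basicInterval m n x)) :
    dimH A ≤ ENNReal.ofReal e := by
  refine dimH_le fun d hd ↦ le_of_not_gt fun hlt ↦ ?_
  have hed : e < d := by
    by_contra! hde
    exact hlt.not_ge (by simpa using ENNReal.ofReal_le_ofReal hde)
  have hunion : A ⊆ ⋃ N, {x ∈ A | ∀ n ≥ N,
      ENNReal.ofReal (((m : ℝ) ^ n)⁻¹ ^ e) ≤ ν (basicInterval m n x)} := fun x hx ↦
    mem_iUnion.mpr ((eventually_atTop.mp (hν x hx)).imp fun _ hN ↦ ⟨hx, hN⟩)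
  have hnull : μH[d] A = 0 := measure_mono_null hunion <| measure_iUnion_null fun _ ↦
    hausdorffMeasure_eq_zero_of_forall_le_measure_basicInterval ν hm
      (fun _ hx ↦ hA hx.1) hed fun _ hx ↦ hx.2
  exact ENNReal.zero_ne_top (hnull ▸ hd)

end Billingsley

lemma eventually_exp_le_of_limsup_lt {p : ℕ → ℝ} {c t : ℝ} (hc : 0 < c)
    (hp : ∀ n, c ^ (n + 1) ≤ p n)
    (h : limsup (fun n : ℕ ↦ -(1 / (n : ℝ)) * Real.log (p n)) atTop < t) :
    ∀ᶠ n : ℕ in atTop, Real.exp (-(n * t)) ≤ p n := by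
  have hpos : ∀ n, 0 < p n := fun n ↦ (pow_pos hc _).trans_le (hp n)
  -- without an upper bound the `limsup` in `ℝ` would be the junk value `0`
  have hbdd : IsBoundedUnder (· ≤ ·) atTop fun n : ℕ ↦ -(1 / (n : ℝ)) * Real.log (p n) := by
    refine isBoundedUnder_of_eventually_le (a := 2 * |Real.log c|) ?_
    filter_upwards [eventually_ge_atTop 1] with n hn
    have hn' : (1 : ℝ) ≤ n := by exact_mod_cast hn
    have hlog : -(((n : ℝ) + 1) * |Real.log c|) ≤ Real.log (p n) := calc
      -(((n : ℝ) + 1) * |Real.log c|) ≤ ((n : ℝ) + 1) * Real.log c := by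
        nlinarith [neg_abs_le (Real.log c)]
      _ = Real.log (c ^ (n + 1)) := by rw [Real.log_pow]; push_cast; ring
      _ ≤ Real.log (p n) := Real.log_le_log (pow_pos hc _) (hp n)
    rw [neg_mul, neg_le, one_div, ← div_eq_inv_mul, le_div_iff₀ (by positivity)]
    nlinarith [abs_nonneg (Real.log c)]
  filter_upwards [eventually_lt_of_limsup_lt h hbdd, eventually_ge_atTop 1] with n hlt hn
  have hn' : (0 : ℝ) < n := by exact_mod_cast hn
  have hlog : -(n * t) < Real.log (p n) := by
    rw [neg_mul, one_div, ← div_eq_inv_mul, neg_lt, lt_div_iff₀ hn'] at hlt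
    linarith
  exact ((Real.lt_log_iff_exp_lt (hpos n)).mp hlog).le

theorem hausdorff_dim_upper_bound_general (m : ℕ) (hm : 1 < m)
    (s : ℕ → ℝ) (hspos : ∀ j < m, 0 < s j)
    (hstop : ∀ j, m ≤ j → s j = 0)
    (μs : Measure (ℕ → ℕ)) (hprob : IsProbabilityMeasure μs)
    (hcyl : ∀ (n : ℕ) (β : ℕ → ℕ),
      μs {ξ | ∀ i ≤ n, ξ i = β i} = ∏ i ∈ Finset.range (n + 1), ENNReal.ofReal (s (β i))) :
    dimH {x ∈ Set.Ioo (0 : ℝ) 1 |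
        Filter.limsup (fun n : ℕ =>
          -((1 : ℝ) / n) * Real.log ((μs.map (phiMap m) (basicInterval m n x)).toReal))
          atTop ≤ -∑ j ∈ Finset.range m, s j * Real.log (s j)} ≤
      ENNReal.ofReal ((-∑ j ∈ Finset.range m, s j * Real.log (s j)) / Real.log m) := by
  set h := -∑ j ∈ Finset.range m, s j * Real.log (s j)
  set ν := μs.map (phiMap m)
  have hlog : 0 < Real.log m := Real.log_pos (by exact_mod_cast hm)
  obtain ⟨c, hc, hlower⟩ := exists_pow_le_map_phiMap_basicInterval hm hspos hstop hcyl
  refine ENNReal.le_of_forall_pos_le_add fun ε hε _ ↦ ?_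
  set e := h / Real.log m + ε
  have hrate : ∀ n : ℕ, ((m : ℝ) ^ n)⁻¹ ^ e = Real.exp (-(n * (e * Real.log m))) := fun n ↦ by
    rw [Real.rpow_def_of_pos (by positivity), Real.log_inv, Real.log_pow]
    ring_nf
  refine (dimH_le_of_eventually_le_measure_basicInterval ν hm (e := e)
    (fun x hx ↦ Ioo_subset_Ico_self hx.1) fun x hx ↦ ?_).trans ?_
  · have hmass : ∀ n, c ^ (n + 1) ≤ (ν (basicInterval m n x)).toReal := fun n ↦
      (ENNReal.ofReal_le_iff_le_toReal (measure_ne_top _ _)).mp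
        (hlower x (Ioo_subset_Ico_self hx.1) n)
    have hlt : h < e * Real.log m := by
      rw [add_mul, div_mul_cancel₀ _ hlog.ne']
      exact lt_add_of_pos_right _ (mul_pos (by exact_mod_cast hε) hlog)
    filter_upwards [eventually_exp_le_of_limsup_lt hc hmass (hx.2.trans_lt hlt)] with n hn
    rw [hrate, ← ENNReal.ofReal_toReal (measure_ne_top ν _)]
    exact ENNReal.ofReal_le_ofReal hn
  · exact ENNReal.ofReal_add_le.trans_eq (by rw [ENNReal.ofReal_coe_nnreal])

/-- Billingsley-type upper bound (4.13): if `s = (s_0,…,s_{m−1})` is a probability vector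
with all entries positive, `ν = φμ_s` the pushforward of the Bernoulli measure `μ_s`, and
`h = −Σ_j s_j ln s_j`, then
`W = {x ∈ (0,1) : limsup_n (−(1/n) ln ν(I_n(x))) ≤ h}` has Hausdorff dimension
`HD(W) ≤ h / ln m`. -/
theorem hausdorff_dim_upper_bound (m : ℕ) (hm : 1 < m)
    (s : ℕ → ℝ) (hspos : ∀ j < m, 0 < s j) (hssum : ∑ j ∈ Finset.range m, s j = 1)
    (hstop : ∀ j, m ≤ j → s j = 0)
    (μs : Measure (ℕ → ℕ)) (hprob : IsProbabilityMeasure μs)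
    (hcyl : ∀ (n : ℕ) (β : ℕ → ℕ),
      μs {ξ | ∀ i ≤ n, ξ i = β i} = ∏ i ∈ Finset.range (n + 1), ENNReal.ofReal (s (β i))) :
    dimH {x ∈ Set.Ioo (0 : ℝ) 1 |
        Filter.limsup (fun n : ℕ =>
          -((1 : ℝ) / n) * Real.log ((μs.map (phiMap m) (basicInterval m n x)).toReal))
          atTop ≤ -∑ j ∈ Finset.range m, s j * Real.log (s j)} ≤
      ENNReal.ofReal ((-∑ j ∈ Finset.range m, s j * Real.log (s j)) / Real.log m) :=
  hausdorff_dim_upper_bound_general m hm s hspos hstop μs hprob hcyl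
end

section
/- Suppose q_1(k) = k for all k, and let r̄ = (r_1, r_2, …) be a probability vector on the positive integers with p_α = Π_{i=1}^ℓ r_{α_i} for every α ∈ A_ℓ = {1,2,3,…}^ℓ. Then there exists an irrational z ∈ (0,1) with z ∈ U_p such that its continued fraction digits satisfy a_n(z) ≤ n for all n ≥ 1; in particular U_p ≠ ∅. (Construction in the proof of Proposition 2.9.) -/
open MeasureTheory Filter
open scoped ENNReal

/-- The Gauss map `T x = {1/x}`. -/
noncomputable def gaussMap (x : ℝ) : ℝ := Int.fract x⁻¹

/-- The `n`-th continued fraction digit `a_n(x) = ⌊1/(T^n x)⌋`. -/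
noncomputable def cfDigit (n : ℕ) (x : ℝ) : ℕ := ⌊(gaussMap^[n] x)⁻¹⌋₊

/-- `N_α(x,n)`: the number of `k ∈ {1,…,n}` such that
`(a_{q_1(k)}(x),…,a_{q_ℓ(k)}(x)) = α`. -/
noncomputable def NwordCF {ℓ : ℕ} (q : Fin ℓ → ℕ → ℕ) (α : Fin ℓ → ℕ)
    (x : ℝ) (n : ℕ) : ℕ :=
  ((Finset.Icc 1 n).filter fun k => ∀ i, cfDigit (q i k) x = α i).card

/-- The set `U_p` of irrational `x ∈ (0,1)` such that `N_α(x,n)/n → p_α` for every word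
`α ∈ {1,2,3,…}^ℓ`. -/
noncomputable def UsetCF {ℓ : ℕ} (q : Fin ℓ → ℕ → ℕ) (p : (Fin ℓ → ℕ) → ℝ) : Set ℝ :=
  {x ∈ Set.Ioo (0 : ℝ) 1 | Irrational x ∧ ∀ α : Fin ℓ → ℕ, (∀ i, 1 ≤ α i) →
    Tendsto (fun n : ℕ => (NwordCF q α x n : ℝ) / n) atTop (nhds (p α))}

/-!
Choose the digits at random and independently, the `m`-th one distributed like `r` but with
values outside `{1, …, m}` replaced by `1`. Then `a_m ≤ m`, and since `r_0 = 0` the law of `a_m`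
tends to `r`. Fix a word `α`. Since positions `q_i(k)` are distinct in `i` and each `q_i` is
injective, the events `{a_{q_i(k)} = α_i for all i}` are independent except for `O(n)` of the
pairs `(k, k') ∈ [1, n]²`. So the variance of the number of occurrences up to `n` is `O(n)`, and
Chebyshev's inequality along the squares together with Borel–Cantelli gives a strong law of large
numbers. The expected frequencies tend to `∏ r_{α_i}`, so for almost every digit sequence every
one of the countably many words has the required frequency. Any digit sequence of positive
integers is the continued fraction expansion of an irrational number in `(0, 1)`.
-/

open Finset ProbabilityTheory Topology

section ContinuedFraction

noncomputable def cfApprox : ℕ → (ℕ → ℕ) → ℝ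
  | 0, _ => 0
  | N + 1, b => ((b 0 : ℝ) + cfApprox N fun n => b (n + 1))⁻¹

noncomputable def cfValue (b : ℕ → ℕ) : ℝ := limUnder atTop fun N => cfApprox N b

variable {b : ℕ → ℕ}

lemma cfApprox_mem_Icc (hb : ∀ n, 1 ≤ b n) (N : ℕ) : cfApprox N b ∈ Set.Icc (0 : ℝ) 1 := by
  induction N generalizing b with
  | zero => simp [cfApprox]
  | succ N ih =>
    have h0 := (ih fun n => hb (n + 1)).1
    have h1 : (1 : ℝ) ≤ b 0 := mod_cast hb 0
    exact ⟨by simp only [cfApprox]; positivity, inv_le_one_of_one_le₀ (by linarith)⟩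

/-- One step `s ↦ 1/(a + s)` is merely non-expanding; two steps contract by a factor `4`. -/
lemma abs_inv_add_inv_sub_inv_add_inv_le {a₀ a₁ s s' : ℝ} (ha₀ : 1 ≤ a₀) (ha₁ : 1 ≤ a₁)
    (hs : 0 ≤ s) (hs' : 0 ≤ s') :
    |(a₀ + (a₁ + s)⁻¹)⁻¹ - (a₀ + (a₁ + s')⁻¹)⁻¹| ≤ |s - s'| / 4 := by
  have hx : 1 ≤ a₁ + s := by linarith
  have hy : 1 ≤ a₁ + s' := by linarith
  have key : (a₀ + (a₁ + s)⁻¹)⁻¹ - (a₀ + (a₁ + s')⁻¹)⁻¹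
      = (s - s') / ((a₀ * (a₁ + s) + 1) * (a₀ * (a₁ + s') + 1)) := by
    field_simp
    ring
  have hx' : 2 ≤ a₀ * (a₁ + s) + 1 := by nlinarith
  have hy' : 2 ≤ a₀ * (a₁ + s') + 1 := by nlinarith
  rw [key, abs_div, abs_of_pos (a := (_ + 1) * _) (by nlinarith)]
  exact div_le_div_of_nonneg_left (abs_nonneg _) (by norm_num) (by nlinarith)

lemma abs_cfApprox_sub_cfApprox_le (hb : ∀ n, 1 ≤ b n) (K : ℕ) {M M' : ℕ} (hM : 2 * K ≤ M)
    (hM' : 2 * K ≤ M') : |cfApprox M b - cfApprox M' b| ≤ (1 / 4 : ℝ) ^ K := by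
  induction K generalizing b M M' with
  | zero =>
    have h := cfApprox_mem_Icc hb M
    have h' := cfApprox_mem_Icc hb M'
    rw [pow_zero, abs_le]
    constructor <;> linarith [h.1, h.2, h'.1, h'.2]
  | succ K ih =>
    obtain ⟨m, rfl⟩ : ∃ m, M = m + 2 := ⟨M - 2, by omega⟩
    obtain ⟨m', rfl⟩ : ∃ m', M' = m' + 2 := ⟨M' - 2, by omega⟩
    have hb₂ : ∀ n, 1 ≤ b (n + 1 + 1) := fun n => hb _
    calc _ ≤ |cfApprox m (fun n => b (n + 1 + 1)) - cfApprox m' (fun n => b (n + 1 + 1))| / 4 :=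
          abs_inv_add_inv_sub_inv_add_inv_le (mod_cast hb 0) (mod_cast hb 1)
            (cfApprox_mem_Icc hb₂ m).1 (cfApprox_mem_Icc hb₂ m').1
      _ ≤ (1 / 4 : ℝ) ^ K / 4 := by gcongr; exact ih hb₂ (by omega) (by omega)
      _ = (1 / 4 : ℝ) ^ (K + 1) := by ring

lemma tendsto_cfApprox (hb : ∀ n, 1 ≤ b n) :
    Tendsto (fun N => cfApprox N b) atTop (𝓝 (cfValue b)) := by
  refine (Metric.cauchySeq_iff'.2 fun δ hδ => ?_).tendsto_limUnder
  obtain ⟨K, hK⟩ := exists_pow_lt_of_lt_one hδ (by norm_num : (1 / 4 : ℝ) < 1)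
  exact ⟨2 * K, fun n hn => (abs_cfApprox_sub_cfApprox_le hb K hn le_rfl).trans_lt hK⟩

lemma cfValue_mem_Icc (hb : ∀ n, 1 ≤ b n) : cfValue b ∈ Set.Icc (0 : ℝ) 1 :=
  isClosed_Icc.mem_of_tendsto (tendsto_cfApprox hb) (.of_forall (cfApprox_mem_Icc hb))

lemma cfValue_inv (hb : ∀ n, 1 ≤ b n) : (cfValue b)⁻¹ = b 0 + cfValue fun n => b (n + 1) := by
  have hb' : ∀ n, 1 ≤ b (n + 1) := fun n => hb _
  have hpos : (b 0 : ℝ) + cfValue (fun n => b (n + 1)) ≠ 0 := by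
    have : (1 : ℝ) ≤ b 0 := mod_cast hb 0
    linarith [(cfValue_mem_Icc hb').1]
  have h : Tendsto (fun N => cfApprox (N + 1) b) atTop
      (𝓝 ((b 0 : ℝ) + cfValue fun n => b (n + 1))⁻¹) :=
    ((tendsto_cfApprox hb').const_add _).inv₀ hpos
  rw [tendsto_nhds_unique ((tendsto_cfApprox hb).comp (tendsto_add_atTop_nat 1)) h, inv_inv]

lemma cfValue_pos (hb : ∀ n, 1 ≤ b n) : 0 < cfValue b := by
  have h1 : (1 : ℝ) ≤ b 0 := mod_cast hb 0
  have h2 := (cfValue_mem_Icc fun n => hb (n + 1)).1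
  rw [← inv_pos, cfValue_inv hb]
  positivity

lemma cfValue_mem_Ioo (hb : ∀ n, 1 ≤ b n) : cfValue b ∈ Set.Ioo (0 : ℝ) 1 := by
  refine ⟨cfValue_pos hb, ?_⟩
  have h1 : (1 : ℝ) ≤ b 0 := mod_cast hb 0
  have h2 := cfValue_pos fun n => hb (n + 1)
  rw [← one_lt_inv₀ (cfValue_pos hb), cfValue_inv hb]
  linarith

lemma gaussMap_cfValue (hb : ∀ n, 1 ≤ b n) :
    gaussMap (cfValue b) = cfValue fun n => b (n + 1) := by
  rw [gaussMap, cfValue_inv hb, add_comm, ← Int.cast_natCast, Int.fract_add_intCast,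
    Int.fract_eq_self]
  exact ⟨(cfValue_mem_Icc fun n => hb (n + 1)).1, (cfValue_mem_Ioo fun n => hb (n + 1)).2⟩

lemma gaussMap_iterate_cfValue (hb : ∀ n, 1 ≤ b n) (n : ℕ) :
    gaussMap^[n] (cfValue b) = cfValue fun m => b (m + n) := by
  induction n with
  | zero => rfl
  | succ n ih =>
    rw [Function.iterate_succ_apply', ih, gaussMap_cfValue fun m => hb _]
    simp only [add_right_comm _ 1 n, add_assoc]

lemma cfDigit_cfValue (hb : ∀ n, 1 ≤ b n) (n : ℕ) : cfDigit n (cfValue b) = b n := by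
  have hb' : ∀ m, 1 ≤ b (m + n) := fun m => hb _
  have := cfValue_mem_Ioo fun m => hb' (m + 1)
  rw [cfDigit, gaussMap_iterate_cfValue hb, cfValue_inv hb', zero_add,
    Nat.floor_eq_iff (by linarith [this.1])]
  exact ⟨by linarith [this.1], by linarith [this.2]⟩

open GenContFract in
lemma irrational_of_gaussMap_iterate_ne_zero {x : ℝ} (h : ∀ n, gaussMap^[n] (Int.fract x) ≠ 0) :
    Irrational x := by
  have hstream : ∀ n, ∃ p, IntFractPair.stream x n = some p ∧
      p.fr = gaussMap^[n] (Int.fract x) := by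
    intro n
    induction n with
    | zero => exact ⟨_, IntFractPair.stream_zero x, rfl⟩
    | succ n ih =>
      obtain ⟨p, hp, hfr⟩ := ih
      refine ⟨_, IntFractPair.stream_succ_of_some hp (hfr ▸ h n), ?_⟩
      rw [Function.iterate_succ_apply', ← hfr]
      rfl
  rintro ⟨q, rfl⟩
  obtain ⟨n, hn⟩ := (terminates_iff_rat (q : ℝ)).2 ⟨q, rfl⟩
  obtain ⟨p, hp, -⟩ := hstream (n + 1)
  exact Option.some_ne_none _ (hp ▸ of_terminatedAt_n_iff_succ_nth_intFractPair_stream_eq_none.1 hn)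

lemma irrational_cfValue (hb : ∀ n, 1 ≤ b n) : Irrational (cfValue b) := by
  refine irrational_of_gaussMap_iterate_ne_zero fun n => ?_
  rw [Int.fract_eq_self.2 ⟨(cfValue_mem_Icc hb).1, (cfValue_mem_Ioo hb).2⟩,
    gaussMap_iterate_cfValue hb]
  exact (cfValue_pos fun m => hb _).ne'

end ContinuedFraction

section Averages

lemma sum_Icc_one_eq_sum_range {M : Type*} [AddCommMonoid M] (u : ℕ → M) (n : ℕ) :
    ∑ k ∈ Icc 1 n, u k = ∑ k ∈ range n, u (k + 1) := by
  rw [show Icc 1 n = Ico 1 (n + 1) from rfl, sum_Ico_eq_sum_range, Nat.add_sub_cancel]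
  simp only [add_comm 1]

lemma Filter.Tendsto.cesaro_Icc {u : ℕ → ℝ} {l : ℝ} (h : Tendsto u atTop (𝓝 l)) :
    Tendsto (fun n : ℕ => (∑ k ∈ Icc 1 n, u k) / n) atTop (𝓝 l) := by
  simpa [sum_Icc_one_eq_sum_range, div_eq_inv_mul] using
    (h.comp (tendsto_add_atTop_nat 1)).cesaro

lemma tendsto_div_of_tendsto_sq_div {u : ℕ → ℝ} (hu : ∀ n, |u (n + 1) - u n| ≤ 1)
    (hsq : Tendsto (fun m : ℕ => u (m ^ 2) / (m ^ 2 : ℕ)) atTop (𝓝 0)) :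
    Tendsto (fun n : ℕ => u n / n) atTop (𝓝 0) := by
  have hsqrt : Tendsto Nat.sqrt atTop atTop :=
    tendsto_atTop_atTop.2 fun b => ⟨b ^ 2, fun n hn => Nat.le_sqrt'.2 hn⟩
  have hbound : ∀ n, 1 ≤ n →
      ‖u n / n‖ ≤ |u (n.sqrt ^ 2) / (n.sqrt ^ 2 : ℕ)| + 2 / n.sqrt := by
    intro n hn
    have hmn := Nat.sqrt_le' n
    have hlt := Nat.lt_succ_sqrt' n
    have hm : 1 ≤ n.sqrt := Nat.le_sqrt'.2 (by simpa using hn)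
    generalize n.sqrt = m at *
    have hnm : n - m ^ 2 ≤ 2 * m := by
      rw [Nat.succ_eq_add_one, show (m + 1) ^ 2 = m ^ 2 + 2 * m + 1 by ring] at hlt
      omega
    have hdist : |u n - u (m ^ 2)| ≤ (n - m ^ 2 : ℕ) := by
      rw [← Real.dist_eq, dist_comm]
      calc dist (u (m ^ 2)) (u n) ≤ ∑ i ∈ Ico (m ^ 2) n, dist (u i) (u (i + 1)) :=
            dist_le_Ico_sum_dist u hmn
        _ ≤ ∑ i ∈ Ico (m ^ 2) n, (1 : ℝ) :=
            sum_le_sum fun i _ => by rw [dist_comm, Real.dist_eq]; exact hu i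
        _ = (n - m ^ 2 : ℕ) := by simp
    have hm0 : (0 : ℝ) < m := by exact_mod_cast hm
    have hmn' : ((m ^ 2 : ℕ) : ℝ) ≤ n := by exact_mod_cast hmn
    have hnm' : ((n - m ^ 2 : ℕ) : ℝ) ≤ 2 * m := by exact_mod_cast hnm
    have hm2 : (0 : ℝ) < (m ^ 2 : ℕ) := by positivity
    rw [Real.norm_eq_abs, abs_div, abs_div, Nat.abs_cast, Nat.abs_cast]
    calc |u n| / n ≤ (|u (m ^ 2)| + 2 * m) / n := by
          gcongr; linarith [abs_sub_abs_le_abs_sub (u n) (u (m ^ 2))]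
      _ = |u (m ^ 2)| / n + 2 * m / n := add_div _ _ _
      _ ≤ |u (m ^ 2)| / (m ^ 2 : ℕ) + 2 * m / (m ^ 2 : ℕ) := by gcongr
      _ = |u (m ^ 2)| / (m ^ 2 : ℕ) + 2 / m := by push_cast; field_simp
  have hlim : Tendsto (fun n : ℕ => |u (n.sqrt ^ 2) / (n.sqrt ^ 2 : ℕ)| + 2 / (n.sqrt : ℝ))
      atTop (𝓝 0) := by
    have := (hsq.abs.add (tendsto_const_div_atTop_nhds_zero_nat (2 : ℝ))).comp hsqrt
    rwa [abs_zero, add_zero] at this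
  exact squeeze_zero_norm' (eventually_atTop.2 ⟨1, hbound⟩) hlim

end Averages

section SparseDependence

variable {Ω : Type*} [MeasurableSpace Ω] {P : Measure Ω} [IsProbabilityMeasure P]

lemma abs_le_one_of_mem_Icc {x : ℝ} (hx : x ∈ Set.Icc (0 : ℝ) 1) : |x| ≤ 1 :=
  abs_le.2 ⟨by linarith [hx.1], hx.2⟩

lemma abs_integral_le_of_abs_le_one {X : Ω → ℝ} (hX : ∀ ω, |X ω| ≤ 1) : |P[X]| ≤ 1 := by
  simpa using norm_integral_le_of_norm_le_const (μ := P) (f := X) (C := 1) (.of_forall hX)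

lemma integral_mem_Icc_of_mem_Icc {X : Ω → ℝ} (hX : ∀ ω, X ω ∈ Set.Icc (0 : ℝ) 1) :
    P[X] ∈ Set.Icc (0 : ℝ) 1 :=
  ⟨integral_nonneg fun ω => (hX ω).1,
    (le_abs_self _).trans (abs_integral_le_of_abs_le_one fun ω => abs_le_one_of_mem_Icc (hX ω))⟩

lemma abs_sub_integral_le_one {X : Ω → ℝ} (hX : ∀ ω, X ω ∈ Set.Icc (0 : ℝ) 1) (ω : Ω) :
    |X ω - P[X]| ≤ 1 := by
  have := integral_mem_Icc_of_mem_Icc (P := P) hX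
  exact abs_sub_le_iff.2 ⟨by linarith [(hX ω).2, this.1], by linarith [(hX ω).1, this.2]⟩

lemma covariance_le_one {X Z : Ω → ℝ} (hX : ∀ ω, X ω ∈ Set.Icc (0 : ℝ) 1)
    (hZ : ∀ ω, Z ω ∈ Set.Icc (0 : ℝ) 1) : cov[X, Z; P] ≤ 1 := by
  refine (le_abs_self _).trans (abs_integral_le_of_abs_le_one fun ω => ?_)
  rw [abs_mul]
  exact mul_le_one₀ (abs_sub_integral_le_one hX ω) (abs_nonneg _) (abs_sub_integral_le_one hZ ω)

variable {Y : ℕ → Ω → ℝ} {Dep : ℕ → ℕ → Prop} [DecidableRel Dep]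

lemma memLp_two_of_mem_Icc (hY : ∀ k, Measurable (Y k)) (hY01 : ∀ k ω, Y k ω ∈ Set.Icc (0 : ℝ) 1)
    (k : ℕ) : MemLp (Y k) 2 P :=
  .of_bound (hY k).aestronglyMeasurable 1 (.of_forall fun ω => abs_le_one_of_mem_Icc (hY01 k ω))

lemma variance_sum_le_card_dependent (hY : ∀ k, Measurable (Y k))
    (hY01 : ∀ k ω, Y k ω ∈ Set.Icc (0 : ℝ) 1)
    (hindep : ∀ k k', ¬ Dep k k' → IndepFun (Y k) (Y k') P) (s : Finset ℕ) :
    Var[∑ k ∈ s, Y k; P] ≤ #{p ∈ s ×ˢ s | Dep p.1 p.2} := by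
  have hL2 := memLp_two_of_mem_Icc (P := P) hY hY01
  rw [variance_sum' fun k _ => hL2 k, ← sum_boole, sum_product]
  refine sum_le_sum fun k _ => sum_le_sum fun k' _ => ?_
  split_ifs with h
  · exact covariance_le_one (hY01 k) (hY01 k')
  · exact ((hindep k k' h).covariance_eq_zero (hL2 k) (hL2 k')).le

/-- Chebyshev's inequality along the squares, summed by Borel–Cantelli. -/
lemma ae_tendsto_sub_integral_div_sq {S : ℕ → Ω → ℝ} (hS : ∀ n, MemLp (S n) 2 P) {C : ℝ}
    (hvar : ∀ n, Var[S n; P] ≤ C * n) :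
    ∀ᵐ ω ∂P, Tendsto (fun m : ℕ => (S (m ^ 2) ω - P[S (m ^ 2)]) / (m ^ 2 : ℕ)) atTop (𝓝 0) := by
  have key : ∀ t : ℕ, ∀ᵐ ω ∂P, ∀ᶠ m in atTop,
      |S ((m + 1) ^ 2) ω - P[S ((m + 1) ^ 2)]| < ((m + 1) ^ 2 : ℕ) / (t + 1 : ℝ) := by
    intro t
    have hbound : ∀ m : ℕ, P {ω | ((m + 1) ^ 2 : ℕ) / (t + 1 : ℝ) ≤
        |S ((m + 1) ^ 2) ω - P[S ((m + 1) ^ 2)]|} ≤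
        ENNReal.ofReal (C * (t + 1) ^ 2 * (1 / ((m + 1 : ℕ) : ℝ) ^ 2)) := by
      intro m
      refine (meas_ge_le_variance_div_sq (hS _) (by positivity)).trans (ENNReal.ofReal_le_ofReal ?_)
      calc Var[S ((m + 1) ^ 2); P] / (((m + 1) ^ 2 : ℕ) / (t + 1 : ℝ)) ^ 2
          ≤ C * ((m + 1) ^ 2 : ℕ) / (((m + 1) ^ 2 : ℕ) / (t + 1 : ℝ)) ^ 2 := by
            gcongr; exact hvar _
        _ = C * (t + 1) ^ 2 * (1 / ((m + 1 : ℕ) : ℝ) ^ 2) := by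
            push_cast; field_simp
    have hsum : Summable fun m : ℕ => C * (t + 1) ^ 2 * (1 / ((m + 1 : ℕ) : ℝ) ^ 2) :=
      ((summable_nat_add_iff 1).2 (Real.summable_one_div_nat_pow.2 one_lt_two)).mul_left _
    refine (ae_eventually_notMem (ne_top_of_le_ne_top ?_ (ENNReal.tsum_le_tsum hbound))).mono
      fun ω hω => hω.mono fun m hm => not_le.1 hm
    have hC : 0 ≤ C := by simpa using (variance_nonneg (S 1) P).trans (hvar 1)
    rw [← ENNReal.ofReal_tsum_of_nonneg (fun m => by positivity) hsum]
    exact ENNReal.ofReal_ne_top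
  filter_upwards [ae_all_iff.2 key] with ω hω
  refine (tendsto_add_atTop_iff_nat 1).1 (Metric.tendsto_atTop.2 fun δ hδ => ?_)
  obtain ⟨t, ht⟩ := exists_nat_one_div_lt hδ
  obtain ⟨N, hN⟩ := eventually_atTop.1 (hω t)
  refine ⟨N, fun m hm => ?_⟩
  have hm2 : (0 : ℝ) < ((m + 1) ^ 2 : ℕ) := by positivity
  rw [Real.dist_eq, sub_zero, abs_div, Nat.abs_cast, div_lt_iff₀ hm2]
  calc _ < ((m + 1) ^ 2 : ℕ) / (t + 1 : ℝ) := hN m hm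
    _ = 1 / (t + 1 : ℝ) * ((m + 1) ^ 2 : ℕ) := by ring
    _ ≤ δ * ((m + 1) ^ 2 : ℕ) := by gcongr

theorem ae_tendsto_sum_sub_integral_div (hY : ∀ k, Measurable (Y k))
    (hY01 : ∀ k ω, Y k ω ∈ Set.Icc (0 : ℝ) 1)
    (hindep : ∀ k k', ¬ Dep k k' → IndepFun (Y k) (Y k') P) {C : ℝ}
    (hcard : ∀ n, (#{p ∈ Icc 1 n ×ˢ Icc 1 n | Dep p.1 p.2} : ℝ) ≤ C * n) :
    ∀ᵐ ω ∂P, Tendsto (fun n : ℕ => (∑ k ∈ Icc 1 n, (Y k ω - P[Y k])) / n) atTop (𝓝 0) := by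
  have hL2 := memLp_two_of_mem_Icc (P := P) hY hY01
  have hS : ∀ n, MemLp (∑ k ∈ Icc 1 n, Y k) 2 P := fun n => memLp_finsetSum' _ fun k _ => hL2 k
  have hmean : ∀ n, ∫ ω, ∑ k ∈ Icc 1 n, Y k ω ∂P = ∑ k ∈ Icc 1 n, P[Y k] := fun n =>
    integral_finsetSum _ fun k _ => (hL2 k).integrable one_le_two
  filter_upwards [ae_tendsto_sub_integral_div_sq hS fun n =>
    (variance_sum_le_card_dependent hY hY01 hindep _).trans (hcard n)] with ω hω
  refine tendsto_div_of_tendsto_sq_div (fun n => ?_) ?_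
  · rw [sum_Icc_succ_top (by omega), add_sub_cancel_left]
    exact abs_sub_integral_le_one (hY01 _) ω
  · simpa [hmean, sum_sub_distrib] using hω

end SparseDependence

section Patterns

variable {Ω : Type*} [MeasurableSpace Ω] {P : Measure Ω} {ℓ : ℕ} {q : Fin ℓ → ℕ → ℕ}

def positions (q : Fin ℓ → ℕ → ℕ) (k : ℕ) : Finset ℕ := univ.image fun i => q i k

lemma mem_positions (q : Fin ℓ → ℕ → ℕ) (i : Fin ℓ) (k : ℕ) : q i k ∈ positions q k :=
  mem_image_of_mem _ (mem_univ i)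

lemma card_not_disjoint_positions_le (hq : ∀ i, Set.InjOn (q i) (Set.Ici 1)) (k n : ℕ) :
    #{k' ∈ Icc 1 n | ¬ Disjoint (positions q k) (positions q k')} ≤ ℓ ^ 2 := by
  have hsub : {k' ∈ Icc 1 n | ¬ Disjoint (positions q k) (positions q k')} ⊆
      (univ : Finset (Fin ℓ × Fin ℓ)).biUnion fun ij => {k' ∈ Icc 1 n | q ij.2 k' = q ij.1 k} := by
    intro k' hk'
    obtain ⟨hk', hdep⟩ := mem_filter.1 hk'
    obtain ⟨_, hi, hj⟩ := not_disjoint_iff.1 hdep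
    obtain ⟨i, -, rfl⟩ := mem_image.1 hi
    obtain ⟨j, -, hj⟩ := mem_image.1 hj
    exact mem_biUnion.2 ⟨(i, j), mem_univ _, mem_filter.2 ⟨hk', hj⟩⟩
  refine (card_le_card hsub).trans (card_biUnion_le.trans ?_)
  calc ∑ ij : Fin ℓ × Fin ℓ, #{k' ∈ Icc 1 n | q ij.2 k' = q ij.1 k} ≤ ∑ _ij : Fin ℓ × Fin ℓ, 1 :=
        sum_le_sum fun ij _ => card_le_one.2 fun a ha c hc => by
          simp only [mem_filter, mem_Icc] at ha hc
          exact hq ij.2 ha.1.1 hc.1.1 (ha.2.trans hc.2.symm)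
    _ = ℓ ^ 2 := by simp [sq]

lemma card_dependent_pairs_le (hq : ∀ i, Set.InjOn (q i) (Set.Ici 1)) (n : ℕ) :
    #{p ∈ Icc 1 n ×ˢ Icc 1 n | ¬ Disjoint (positions q p.1) (positions q p.2)} ≤ ℓ ^ 2 * n := by
  rw [card_filter, sum_product]
  simp_rw [← card_filter]
  calc _ ≤ ∑ _k ∈ Icc 1 n, ℓ ^ 2 := sum_le_sum fun k _ => card_not_disjoint_positions_le hq k n
    _ = ℓ ^ 2 * n := by simp [mul_comm]

noncomputable def patternIndicator (b : ℕ → Ω → ℕ) (q : Fin ℓ → ℕ → ℕ) (α : Fin ℓ → ℕ) (k : ℕ) :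
    Ω → ℝ :=
  {ω | ∀ i, b (q i k) ω = α i}.indicator 1

variable {b : ℕ → Ω → ℕ}

lemma measurableSet_pattern (hb : ∀ m, Measurable (b m)) (α : Fin ℓ → ℕ) (k : ℕ) :
    MeasurableSet {ω | ∀ i, b (q i k) ω = α i} := by
  simp only [Set.ofPred_forall]
  exact .iInter fun i => hb _ (measurableSet_singleton (α i))

lemma indepFun_patternIndicator (hb : ∀ m, Measurable (b m)) (hind : iIndepFun b P)
    (α : Fin ℓ → ℕ) {k k' : ℕ} (h : Disjoint (positions q k) (positions q k')) :
    IndepFun (patternIndicator b q α k) (patternIndicator b q α k') P := by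
  let φ : ∀ k, (positions q k → ℕ) → ℝ := fun k v =>
    if ∀ i, v ⟨q i k, mem_positions q i k⟩ = α i then 1 else 0
  have := (hind.indepFun_finset _ _ h hb).comp (φ := φ k) (ψ := φ k')
    (measurable_of_countable _) (measurable_of_countable _)
  convert this using 1 <;> ext ω <;> simp [patternIndicator, Set.indicator_apply, φ]

lemma integral_patternIndicator (hb : ∀ m, Measurable (b m)) (hind : iIndepFun b P)
    (α : Fin ℓ → ℕ) {k : ℕ} (hk : Function.Injective fun i => q i k) :
    P[patternIndicator b q α k] = ∏ i, P.real {ω | b (q i k) ω = α i} := by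
  simp only [patternIndicator, integral_indicator_one (measurableSet_pattern hb α k),
    measureReal_def, ← ENNReal.toReal_prod]
  congr 1
  have := (hind.precomp hk).measure_inter_preimage_eq_mul univ (sets := fun i => {α i})
    fun i _ => measurableSet_singleton _
  simpa [Set.ofPred_forall, Set.preimage, Set.mem_singleton_iff] using this

lemma tendsto_atTop_of_strictMonoOn_Ici {f : ℕ → ℕ} (hf : StrictMonoOn f (Set.Ici 1)) :
    Tendsto f atTop atTop :=
  (tendsto_add_atTop_iff_nat 1).1 <| StrictMono.tendsto_atTop fun a c h =>
    hf (by simp) (by simp) (by omega)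

theorem ae_tendsto_card_pattern_div (hb : ∀ m, Measurable (b m)) (hind : iIndepFun b P)
    (hdistinct : ∀ k, 1 ≤ k → Function.Injective fun i => q i k)
    (hq : ∀ i, StrictMonoOn (q i) (Set.Ici 1)) {ν : ℕ → ℝ}
    (hν : ∀ a, Tendsto (fun m => P.real {ω | b m ω = a}) atTop (𝓝 (ν a))) (α : Fin ℓ → ℕ) :
    ∀ᵐ ω ∂P, Tendsto (fun n : ℕ => (#{k ∈ Icc 1 n | ∀ i, b (q i k) ω = α i} : ℝ) / n) atTop
      (𝓝 (∏ i, ν (α i))) := by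
  have := hind.isProbabilityMeasure
  set Y := patternIndicator b q α
  have hY01 : ∀ k ω, Y k ω ∈ Set.Icc (0 : ℝ) 1 := fun k ω => by
    simp only [Y, patternIndicator, Set.indicator_apply]
    split_ifs <;> simp
  have hlaw := ae_tendsto_sum_sub_integral_div (P := P) (Y := Y) (C := ℓ ^ 2)
    (fun k => measurable_one.indicator (measurableSet_pattern hb α k)) hY01
    (fun k k' h => indepFun_patternIndicator hb hind α (not_not.1 h))
    fun n => mod_cast card_dependent_pairs_le (fun i => (hq i).injOn) n
  have hmean : Tendsto (fun n : ℕ => (∑ k ∈ Icc 1 n, P[Y k]) / (n : ℝ)) atTop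
      (𝓝 (∏ i, ν (α i))) := by
    have hlim : Tendsto (fun k => ∏ i, P.real {ω | b (q i k) ω = α i}) atTop
        (𝓝 (∏ i, ν (α i))) :=
      tendsto_finsetProd _ fun i _ => (hν (α i)).comp (tendsto_atTop_of_strictMonoOn_Ici (hq i))
    refine hlim.cesaro_Icc.congr fun n => ?_
    congr 1
    exact sum_congr rfl fun k hk =>
      (integral_patternIndicator hb hind α (hdistinct k (mem_Icc.1 hk).1)).symm
  filter_upwards [hlaw] with ω hω
  have hcount : ∀ n, (#{k ∈ Icc 1 n | ∀ i, b (q i k) ω = α i} : ℝ) = ∑ k ∈ Icc 1 n, Y k ω := by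
    intro n
    simp [Y, patternIndicator, Set.indicator_apply, sum_boole]
  simpa [hcount, sum_sub_distrib, sub_div] using hω.add hmean

end Patterns

section RandomDigits

noncomputable def pmfOfHasSum {α : Type*} (r : α → ℝ) (hr : ∀ a, 0 ≤ r a) (hsum : HasSum r 1) :
    PMF α :=
  ⟨fun a => ENNReal.ofReal (r a), by
    rw [← ENNReal.ofReal_one, ← hsum.tsum_eq, ENNReal.ofReal_tsum_of_nonneg hr hsum.summable]
    exact ENNReal.summable.hasSum⟩

lemma pmfOfHasSum_apply {α : Type*} (r : α → ℝ) (hr : ∀ a, 0 ≤ r a) (hsum : HasSum r 1) (a : α) :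
    pmfOfHasSum r hr hsum a = ENNReal.ofReal (r a) :=
  rfl

def clampDigit (m j : ℕ) : ℕ := if 1 ≤ j ∧ j ≤ m then j else 1

lemma one_le_clampDigit (m j : ℕ) : 1 ≤ clampDigit m j := by
  unfold clampDigit; split_ifs with h <;> omega

lemma clampDigit_le {m : ℕ} (hm : 1 ≤ m) (j : ℕ) : clampDigit m j ≤ m := by
  unfold clampDigit; split_ifs with h <;> omega

lemma clampDigit_preimage_subset (m a : ℕ) :
    clampDigit m ⁻¹' {a} ⊆ insert a (insert 0 (Set.Ioi m)) := by
  intro j hj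
  simp only [Set.mem_preimage, Set.mem_singleton_iff, clampDigit] at hj
  simp only [Set.mem_insert_iff, Set.mem_Ioi]
  split_ifs at hj <;> omega

lemma tendsto_toMeasure_clampDigit_preimage (p : PMF ℕ) (hp0 : p 0 = 0) (a : ℕ) :
    Tendsto (fun m => p.toMeasure (clampDigit m ⁻¹' {a})) atTop (𝓝 (p a)) := by
  have htail : Tendsto (fun m => p.toMeasure (Set.Ioi m)) atTop (𝓝 0) := by
    have := tendsto_measure_iInter_atTop (μ := p.toMeasure) (s := fun m : ℕ => Set.Ioi m)
      (fun m => measurableSet_Ioi.nullMeasurableSet) (fun m n h => Set.Ioi_subset_Ioi h)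
      ⟨0, measure_ne_top _ _⟩
    rwa [show (⋂ m : ℕ, Set.Ioi m) = ∅ from Set.eq_empty_of_forall_notMem fun j hj =>
      lt_irrefl j (Set.mem_iInter.1 hj j), measure_empty] at this
  have hlower : ∀ᶠ m in atTop, p a ≤ p.toMeasure (clampDigit m ⁻¹' {a}) := by
    filter_upwards [eventually_ge_atTop a] with m hm
    rcases Nat.eq_zero_or_pos a with rfl | ha
    · simp [hp0]
    · rw [← PMF.toMeasure_apply_singleton p a (measurableSet_singleton a)]
      refine measure_mono fun j hj => ?_
      simp only [Set.mem_singleton_iff] at hj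
      simp [clampDigit, hj, hm, Nat.succ_le_of_lt ha]
  have hupper : ∀ m, p.toMeasure (clampDigit m ⁻¹' {a}) ≤ p a + p.toMeasure (Set.Ioi m) := by
    intro m
    calc _ ≤ p.toMeasure (insert a (insert 0 (Set.Ioi m))) :=
          measure_mono (clampDigit_preimage_subset m a)
      _ ≤ p.toMeasure {a} + (p.toMeasure {0} + p.toMeasure (Set.Ioi m)) := by
          rw [Set.insert_eq, Set.insert_eq]
          exact (measure_union_le _ _).trans (add_le_add_right (measure_union_le _ _) _)
      _ = p a + p.toMeasure (Set.Ioi m) := by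
          simp [PMF.toMeasure_apply_singleton, hp0]
  refine tendsto_of_tendsto_of_tendsto_of_le_of_le' tendsto_const_nhds ?_ hlower
    (.of_forall hupper)
  simpa using (tendsto_const_nhds (x := p a)).add htail

theorem exists_digits_tendsto_card_pattern_div {ℓ : ℕ} {q : Fin ℓ → ℕ → ℕ}
    (hdistinct : ∀ k, 1 ≤ k → Function.Injective fun i => q i k)
    (hq : ∀ i, StrictMonoOn (q i) (Set.Ici 1)) (p : PMF ℕ) (hp0 : p 0 = 0) :
    ∃ b : ℕ → ℕ, (∀ n, 1 ≤ b n) ∧ (∀ n, 1 ≤ n → b n ≤ n) ∧ ∀ α : Fin ℓ → ℕ,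
      Tendsto (fun n : ℕ => (#{k ∈ Icc 1 n | ∀ i, b (q i k) = α i} : ℝ) / n) atTop
        (𝓝 (∏ i, (p (α i)).toReal)) := by
  set P := Measure.infinitePi fun _ : ℕ => p.toMeasure
  set b : ℕ → (ℕ → ℕ) → ℕ := fun m ω => clampDigit m (ω m)
  have hb : ∀ m, Measurable (b m) := fun m =>
    (measurable_of_countable (clampDigit m)).comp (measurable_pi_apply m)
  have hind : iIndepFun b P := iIndepFun_infinitePi fun m => measurable_of_countable (clampDigit m)
  have hlaw : ∀ a, Tendsto (fun m => P.real {ω | b m ω = a}) atTop (𝓝 (p a).toReal) := by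
    intro a
    have hpre : ∀ m, P {ω | b m ω = a} = p.toMeasure (clampDigit m ⁻¹' {a}) := fun m =>
      (measurePreserving_eval_infinitePi (fun _ : ℕ => p.toMeasure) m).measure_preimage
        (s := clampDigit m ⁻¹' {a}) MeasurableSet.of_discrete.nullMeasurableSet
    simp_rw [measureReal_def, hpre]
    exact (ENNReal.tendsto_toReal (PMF.apply_ne_top p a)).comp
      (tendsto_toMeasure_clampDigit_preimage p hp0 a)
  obtain ⟨ω, hω⟩ := (ae_all_iff.2 fun α =>
    ae_tendsto_card_pattern_div hb hind hdistinct hq hlaw α).exists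
  exact ⟨fun m => b m ω, fun m => one_le_clampDigit m _, fun m hm => clampDigit_le hm _, hω⟩

end RandomDigits

section Hypotheses

lemma strictMono_of_lt_of_val_add_one_eq {α : Type*} [Preorder α] {ℓ : ℕ} {f : Fin ℓ → α}
    (h : ∀ i j : Fin ℓ, (i : ℕ) + 1 = j → f i < f j) : StrictMono f := by
  cases ℓ with
  | zero => exact fun i => i.elim0
  | succ n => exact Fin.strictMono_iff_lt_succ.2 fun i => h _ _ (by simp)

variable {ℓ : ℕ} {q : Fin ℓ → ℕ → ℕ} {ε : ℝ}

lemma injective_apply_of_gap (hε : 0 < ε)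
    (hqgap : ∀ i j : Fin ℓ, (i : ℕ) + 1 = (j : ℕ) → ∀ n : ℕ, 1 ≤ n → (q i n : ℝ) + ε * n ≤ q j n)
    {k : ℕ} (hk : 1 ≤ k) : Function.Injective fun i => q i k := by
  have hk' : (1 : ℝ) ≤ k := mod_cast hk
  refine (strictMono_of_lt_of_val_add_one_eq fun i j hij => ?_).injective
  have := hqgap i j hij k hk
  exact_mod_cast (lt_add_of_pos_right _ (by positivity)).trans_le this

lemma strictMonoOn_Ici_one_of_step {f : ℕ → ℕ} (hε : 0 < ε)
    (hf : ∀ n, 1 ≤ n → (f n : ℝ) + ε ≤ f (n + 1)) : StrictMonoOn f (Set.Ici 1) :=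
  strictMonoOn_Ici_of_pred_lt fun m hm => by
    obtain ⟨n, rfl⟩ : ∃ n, m = n + 1 := ⟨m - 1, by omega⟩
    have := hf n (by omega)
    show f n < f (n + 1)
    exact_mod_cast (lt_add_of_pos_right _ hε).trans_le this

end Hypotheses

theorem exists_point_in_UsetCF_general (ℓ : ℕ)
    (q : Fin ℓ → ℕ → ℕ) (ε : ℝ) (hε0 : 0 < ε)
    (hqgap : ∀ i j : Fin ℓ, (i : ℕ) + 1 = (j : ℕ) → ∀ n : ℕ, 1 ≤ n →
      (q i n : ℝ) + ε * n ≤ q j n)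
    (hqmono : ∀ (i : Fin ℓ) (n : ℕ), 1 ≤ n → (q i n : ℝ) + ε ≤ q i (n + 1))
    (r : ℕ → ℝ) (hrnn : ∀ j, 0 ≤ r j) (hr0 : r 0 = 0) (hrsum : HasSum r 1) :
    ∃ z ∈ Set.Ioo (0 : ℝ) 1, Irrational z ∧
      z ∈ UsetCF q (fun α => ∏ i, r (α i)) ∧
      ∀ n : ℕ, 1 ≤ n → cfDigit n z ≤ n := by
  obtain ⟨b, hb1, hbn, hfreq⟩ := exists_digits_tendsto_card_pattern_div
    (fun k hk => injective_apply_of_gap hε0 hqgap hk)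
    (fun i => strictMonoOn_Ici_one_of_step hε0 (hqmono i))
    (pmfOfHasSum r hrnn hrsum) (by simp [pmfOfHasSum_apply, hr0])
  have hz := cfValue_mem_Ioo hb1
  refine ⟨cfValue b, hz, irrational_cfValue hb1, ⟨hz, irrational_cfValue hb1, fun α _ => ?_⟩,
    fun n hn => (cfDigit_cfValue hb1 n).trans_le (hbn n hn)⟩
  simpa [NwordCF, cfDigit_cfValue hb1, pmfOfHasSum_apply, ENNReal.toReal_ofReal (hrnn _)] using
    hfreq α

/-- Construction in the proof of Proposition 2.9: if `q_1(k) = k` and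
`p_α = Π_i r_{α_i}` for a probability vector `r̄ = (r_1,r_2,…)` on the positive integers,
then there is an irrational `z ∈ (0,1)` lying in `U_p` whose continued fraction digits
satisfy `a_n(z) ≤ n` for all `n ≥ 1`; in particular `U_p ≠ ∅`. -/
theorem exists_point_in_UsetCF (ℓ : ℕ) (hℓ : 1 ≤ ℓ)
    (q : Fin ℓ → ℕ → ℕ) (ε : ℝ) (hε0 : 0 < ε) (hε1 : ε ≤ 1)
    (hq1 : ∀ k, q ⟨0, hℓ⟩ k = k)
    (hqpos : ∀ i n, 1 ≤ n → 1 ≤ q i n)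
    (hqgap : ∀ i j : Fin ℓ, (i : ℕ) + 1 = (j : ℕ) → ∀ n : ℕ, 1 ≤ n →
      (q i n : ℝ) + ε * n ≤ q j n)
    (hqmono : ∀ (i : Fin ℓ) (n : ℕ), 1 ≤ n → (q i n : ℝ) + ε ≤ q i (n + 1))
    (r : ℕ → ℝ) (hrnn : ∀ j, 0 ≤ r j) (hr0 : r 0 = 0) (hrsum : HasSum r 1) :
    ∃ z ∈ Set.Ioo (0 : ℝ) 1, Irrational z ∧
      z ∈ UsetCF q (fun α => ∏ i, r (α i)) ∧
      ∀ n : ℕ, 1 ≤ n → cfDigit n z ≤ n :=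
  exists_point_in_UsetCF_general ℓ q ε hε0 hqgap hqmono r hrnn hr0 hrsum
end
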